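/- arXiv:2008.09013 — 3 statements merged into one kernel-verified Lean document; each statement's English description precedes it below -/
import Mathlib

section
/- For matrices (A,B,C,D) over a field F, the set of vectors v(z) = (y(z), u(z)) ∈ F[z]^{n-k} × F[z]^k for which there exists x(z) ∈ F[z]^s with H(z)·(x(z),y(z),u(z))^T = 0, where H(z) = [[zI−A, 0, −B],[−C, I, −D]], forms an F[z]-submodule of F[z]^n of rank k. -/
open Polynomial

section Aux

variable {F : Type*} [Field F] {s k : ℕ}

private lemma charmatrix_mulVec (A : Matrix (Fin s) (Fin s) F) (x : Fin s → F[X]) :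
    (Matrix.charmatrix A).mulVec x = (X : F[X]) • x - (A.map C).mulVec x := by
  unfold Matrix.charmatrix
  rw [Matrix.sub_mulVec]
  congr 1
  funext i
  simp [Matrix.mulVec_diagonal, Matrix.scalar]

private lemma eqn_iff (A : Matrix (Fin s) (Fin s) F) (x w : Fin s → F[X]) :
    (Matrix.charmatrix A).mulVec x = w ↔
      (X : F[X]) • x = (A.map C).mulVec x + w := by
  rw [charmatrix_mulVec, sub_eq_iff_eq_add']

private lemma charmatrix_det_ne_zero (A : Matrix (Fin s) (Fin s) F) :
    (Matrix.charmatrix A).det ≠ 0 := by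
  have := A.charpoly_monic
  rw [Matrix.charpoly] at this
  exact this.ne_zero

private lemma charmatrix_inj (A : Matrix (Fin s) (Fin s) F) {x y : Fin s → F[X]}
    (h : (Matrix.charmatrix A).mulVec x = (Matrix.charmatrix A).mulVec y) : x = y := by
  have hd := charmatrix_det_ne_zero A
  have h2 := congrArg ((Matrix.charmatrix A).adjugate.mulVec) h
  rw [Matrix.mulVec_mulVec, Matrix.mulVec_mulVec, Matrix.adjugate_mul,
    Matrix.smul_mulVec, Matrix.smul_mulVec, Matrix.one_mulVec,
    Matrix.one_mulVec] at h2
  funext i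
  have := congrFun h2 i
  simp only [Pi.smul_apply, smul_eq_mul] at this
  exact mul_left_cancel₀ hd this

end Aux

/-- The set of `(y(z),u(z))` admitting a polynomial state trajectory `x(z)` with
`[zI−A, 0, −B; −C, I, −D]·(x,y,u)ᵀ = 0` is an `F[z]`-submodule of rank `k`. -/
theorem stmt8 (F : Type*) [Field F] (s n k : ℕ)
    (A : Matrix (Fin s) (Fin s) F) (B : Matrix (Fin s) (Fin k) F)
    (Cm : Matrix (Fin (n - k)) (Fin s) F) (Dm : Matrix (Fin (n - k)) (Fin k) F) :
    ∃ M : Submodule F[X] ((Fin (n - k) → F[X]) × (Fin k → F[X])),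
      (M : Set ((Fin (n - k) → F[X]) × (Fin k → F[X]))) =
        {v | ∃ x : Fin s → F[X],
          (X : F[X]) • x = (A.map Polynomial.C).mulVec x + (B.map Polynomial.C).mulVec v.2 ∧
          v.1 = (Cm.map Polynomial.C).mulVec x + (Dm.map Polynomial.C).mulVec v.2} ∧
      Module.rank F[X] M = k := by
  classical
  set G := Matrix.charmatrix A with hG
  set Ap := A.map (C : F →+* F[X]) with hAp
  set Bp := B.map (C : F →+* F[X]) with hBp
  set Cp := Cm.map (C : F →+* F[X]) with hCp
  set Dp := Dm.map (C : F →+* F[X]) with hDp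
  set S : Set ((Fin (n - k) → F[X]) × (Fin k → F[X])) :=
    {v | ∃ x : Fin s → F[X],
      (X : F[X]) • x = Ap.mulVec x + Bp.mulVec v.2 ∧
      v.1 = Cp.mulVec x + Dp.mulVec v.2} with hS
  have mem_iff : ∀ v : (Fin (n - k) → F[X]) × (Fin k → F[X]),
      v ∈ S ↔ ∃ x, G.mulVec x = Bp.mulVec v.2 ∧ v.1 = Cp.mulVec x + Dp.mulVec v.2 := by
    intro v
    constructor
    · rintro ⟨x, h1, h2⟩
      exact ⟨x, (eqn_iff A x _).2 h1, h2⟩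
    · rintro ⟨x, h1, h2⟩
      exact ⟨x, (eqn_iff A x _).1 h1, h2⟩
  -- S is a submodule
  let M : Submodule F[X] ((Fin (n - k) → F[X]) × (Fin k → F[X])) :=
    { carrier := S
      add_mem' := by
        rintro a b ⟨x, h1, h2⟩ ⟨x', h1', h2'⟩
        refine ⟨x + x', ?_, ?_⟩
        · simp only [smul_add, h1, h1', Matrix.mulVec_add, Prod.snd_add]
          abel
        · simp only [Prod.fst_add, h2, h2', Matrix.mulVec_add, Prod.snd_add]
          abel
      zero_mem' := ⟨0, by simp, by simp⟩
      smul_mem' := by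
        rintro c v ⟨x, h1, h2⟩
        refine ⟨c • x, ?_, ?_⟩
        · show (X : F[X]) • c • x = Ap.mulVec (c • x) + Bp.mulVec (c • v.2)
          rw [smul_comm, h1, smul_add, Matrix.mulVec_smul, Matrix.mulVec_smul]
        · show c • v.1 = Cp.mulVec (c • x) + Dp.mulVec (c • v.2)
          rw [h2, smul_add, Matrix.mulVec_smul, Matrix.mulVec_smul] }
  refine ⟨M, rfl, ?_⟩
  -- the "input" submodule
  let N : Submodule F[X] (Fin k → F[X]) :=
    { carrier := {u | ∃ x, G.mulVec x = Bp.mulVec u}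
      add_mem' := by
        rintro a b ⟨x, h1⟩ ⟨x', h1'⟩
        exact ⟨x + x', by rw [Matrix.mulVec_add, Matrix.mulVec_add, h1, h1']⟩
      zero_mem' := ⟨0, by simp⟩
      smul_mem' := by
        rintro c u ⟨x, h1⟩
        exact ⟨c • x, by rw [Matrix.mulVec_smul, Matrix.mulVec_smul, h1]⟩ }
  -- linear equivalence M ≃ N via the second projection
  let f : M →ₗ[F[X]] N :=
    { toFun := fun v => ⟨v.1.2, by
        obtain ⟨x, h1, _⟩ := (mem_iff v.1).1 v.2
        exact ⟨x, h1⟩⟩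
      map_add' := fun a b => rfl
      map_smul' := fun c a => rfl }
  have hf_bij : Function.Bijective f := by
    constructor
    · rintro ⟨a, ha⟩ ⟨b, hb⟩ hab
      have h2 : a.2 = b.2 := congrArg Subtype.val hab
      obtain ⟨x, hx1, hx2⟩ := (mem_iff a).1 ha
      obtain ⟨x', hx1', hx2'⟩ := (mem_iff b).1 hb
      have hxx : x = x' := charmatrix_inj A (by rw [hx1, hx1', h2])
      have h1 : a.1 = b.1 := by rw [hx2, hx2', hxx, h2]
      exact Subtype.ext (Prod.ext h1 h2)
    · rintro ⟨u, x, hx⟩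
      refine ⟨⟨(Cp.mulVec x + Dp.mulVec u, u), (mem_iff _).2 ⟨x, hx, rfl⟩⟩, rfl⟩
  have hMN : Module.rank F[X] M = Module.rank F[X] N :=
    (LinearEquiv.ofBijective f hf_bij).rank_eq
  rw [hMN]
  -- rank N = k
  have hle : Module.rank F[X] N ≤ k := by
    have := Submodule.rank_le N
    rwa [rank_fin_fun] at this
  have hge : (k : Cardinal) ≤ Module.rank F[X] N := by
    have hd := charmatrix_det_ne_zero A
    let g : (Fin k → F[X]) →ₗ[F[X]] N :=
      { toFun := fun u => ⟨G.det • u, G.adjugate.mulVec (Bp.mulVec u), by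
          rw [Matrix.mulVec_mulVec, Matrix.mul_adjugate, Matrix.smul_mulVec,
            Matrix.one_mulVec, Matrix.mulVec_smul]⟩
        map_add' := fun a b => Subtype.ext (by simp [smul_add])
        map_smul' := fun c a => Subtype.ext (by
          show G.det • c • a = c • G.det • a
          rw [smul_comm]) }
    have hg_inj : Function.Injective g := by
      rintro a b hab
      have h : G.det • a = G.det • b := congrArg Subtype.val hab
      funext i
      have := congrFun h i
      simp only [Pi.smul_apply, smul_eq_mul] at this
      exact mul_left_cancel₀ hd this
    have := LinearMap.rank_le_of_injective g hg_inj
    rwa [rank_fin_fun] at this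
  exact le_antisymm hle hge
end

section
/- Let (A,B,C,D) define a linear system over a field F with state dimension s, and suppose the input and output sequences satisfy u_i = y_i = 0 for all i > γ+μ while the trajectory starts at x_0 = 0. Then for every w ∈ ℕ₀: C A^{γ+μ+w} B u_0 + C A^{γ+μ+w-1} B u_1 + ... + C A^w B u_{γ+μ} = 0. -/
open Finset Matrix

/-!
From `x 0 = 0` the state is the convolution `x τ = ∑_{t < τ} A^(τ-1-t) B u t`, so the output is
`y τ = ∑_{t < τ} C A^(τ-1-t) B u t + D u τ`. At a time `τ = γ + μ + w + 1` past the horizon both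
`y τ` and `u τ` vanish, and so do the inputs `u t` with `γ + μ < t`; what remains of the convolution
is the claimed sum.
-/

section LinearSystem

variable {R ι κ ο : Type*} [Semiring R] [Fintype ι] [DecidableEq ι] [Fintype κ]
  {A : Matrix ι ι R} {B : Matrix ι κ R} {u : ℕ → κ → R} {x : ℕ → ι → R}

theorem state_eq_sum_of_initial_eq_zero (h0 : x 0 = 0)
    (hrec : ∀ τ, x (τ + 1) = A *ᵥ x τ + B *ᵥ u τ) (τ : ℕ) :
    x τ = ∑ t ∈ range τ, (A ^ (τ - 1 - t) * B) *ᵥ u t := by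
  induction τ with
  | zero => simpa using h0
  | succ τ ih =>
    rw [hrec, ih, mulVec_sum, sum_range_succ, Nat.add_sub_cancel, Nat.sub_self, pow_zero,
      Matrix.one_mul]
    congr 1
    refine sum_congr rfl fun t ht => ?_
    have ht : t < τ := mem_range.1 ht
    rw [mulVec_mulVec, ← Matrix.mul_assoc, ← pow_succ', show τ - 1 - t + 1 = τ - t by omega]

theorem output_eq_sum_of_initial_eq_zero [Fintype ο] (C : Matrix ο ι R) (D : Matrix ο κ R)
    {y : ℕ → ο → R} (h0 : x 0 = 0) (hrec : ∀ τ, x (τ + 1) = A *ᵥ x τ + B *ᵥ u τ)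
    (hout : ∀ τ, y τ = C *ᵥ x τ + D *ᵥ u τ) (τ : ℕ) :
    y τ = ∑ t ∈ range τ, (C * A ^ (τ - 1 - t) * B) *ᵥ u t + D *ᵥ u τ := by
  simp only [hout, state_eq_sum_of_initial_eq_zero h0 hrec τ, mulVec_sum, mulVec_mulVec,
    Matrix.mul_assoc]

end LinearSystem

/-- If inputs and outputs of the system vanish after time `γ+μ` (with zero initial
state), then `C A^{γ+μ+w} B u_0 + ⋯ + C A^w B u_{γ+μ} = 0` for every `w ∈ ℕ₀`. -/
theorem stmt11 (F : Type*) [Field F] (s n k γ μ : ℕ)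
    (A : Matrix (Fin s) (Fin s) F) (B : Matrix (Fin s) (Fin k) F)
    (C : Matrix (Fin (n - k)) (Fin s) F) (D : Matrix (Fin (n - k)) (Fin k) F)
    (u : ℕ → Fin k → F) (y : ℕ → Fin (n - k) → F) (x : ℕ → Fin s → F)
    (h0 : x 0 = 0)
    (hrec : ∀ τ, x (τ + 1) = A.mulVec (x τ) + B.mulVec (u τ))
    (hout : ∀ τ, y τ = C.mulVec (x τ) + D.mulVec (u τ))
    (hu : ∀ i, γ + μ < i → u i = 0)
    (hy : ∀ i, γ + μ < i → y i = 0) :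
    ∀ w : ℕ, ∑ t ∈ range (γ + μ + 1), (C * A ^ (γ + μ + w - t) * B).mulVec (u t) = 0 := by
  intro w
  have hyw := output_eq_sum_of_initial_eq_zero C D h0 hrec hout (γ + μ + w + 1)
  rw [hy _ (by omega), hu _ (by omega), mulVec_zero, add_zero, Nat.add_sub_cancel] at hyw
  refine (sum_subset (range_subset_range.2 (by omega)) fun t _ ht => ?_).trans hyw.symm
  rw [hu t (by simp only [mem_range, not_lt] at ht; omega), mulVec_zero]
end

section
/- An (n,k,δ) MDP convolutional code with n=5, k=3, δ=2 cannot have a column reduced generator matrix G(z) = G_0 + G_1 z with two columns of G_1 identically zero; consequently a column reduced generator matrix of such a code has column degrees (1,1,0). -/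
open Polynomial Finset

/-- Hamming weight of a vector: the number of nonzero components. -/
noncomputable def hammingWt {α ι : Type*} [Zero α] [Fintype ι] (v : ι → α) : ℕ :=
  Nat.card {i // v i ≠ 0}

/-- The `j`-th column distance of a set of polynomial vectors: the minimum over
codewords with nonzero constant coefficient vector of the total Hamming weight of
the coefficient vectors of `z^0, …, z^j`. -/
noncomputable def colDist {F : Type*} [Field F] {ι : Type*} [Fintype ι]
    (S : Set (ι → F[X])) (j : ℕ) : ℕ :=
  sInf {d | ∃ v ∈ S, (∃ i, (v i).coeff 0 ≠ 0) ∧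
    d = ∑ t ∈ range (j + 1), hammingWt fun i => (v i).coeff t}

/-- The degree of a polynomial generator matrix: the maximal degree of its
full-size (`k×k`) minors. -/
noncomputable def genDeg {F : Type*} [Field F] {n k : ℕ}
    (G : Matrix (Fin n) (Fin k) F[X]) : ℕ :=
  Finset.univ.sup fun f : Fin k ↪ Fin n => ((G.submatrix f id).det).natDegree

/-- The largest degree of any entry of the `j`-th column of `G`. -/
noncomputable def colDeg {F : Type*} [Field F] {n k : ℕ}
    (G : Matrix (Fin n) (Fin k) F[X]) (j : Fin k) : ℕ :=
  Finset.univ.sup fun i => (G i j).natDegree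

/-!
Two constant columns of `G` span, over `F`, a plane of constant codewords. That plane contains
a nonzero codeword vanishing in the first coordinate; it is nonzero because the columns are
independent over `F[X]`, and its weight over `z⁰, z¹` is at most `4`, below the column distance
`d₁ᶜ = 5` of an MDP code. So at most one column of `G` is constant; since every column degree is
`≤ 1` and they add up to `2`, the column degrees are `1, 1, 0`.
-/

section HammingWeight

variable {α ι : Type*} [Zero α] [Fintype ι]

lemma hammingWt_zero : hammingWt (0 : ι → α) = 0 := by
  simp [hammingWt]

lemma hammingWt_lt_card {v : ι → α} {i₀ : ι} (h : v i₀ = 0) :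
    hammingWt v < Fintype.card ι := by
  rw [hammingWt, ← Nat.card_eq_fintype_card]
  exact Finite.card_subtype_lt (not_not.2 h)

end HammingWeight

lemma Polynomial.eq_C_of_natDegree_le_one_of_coeff_one_eq_zero {R : Type*} [Semiring R]
    {p : R[X]} (hp : p.natDegree ≤ 1) (h1 : p.coeff 1 = 0) : p = C (p.coeff 0) := by
  have hlin := eq_X_add_C_of_natDegree_le_one hp
  rwa [h1, C_0, zero_mul, zero_add] at hlin

lemma exists_mul_add_mul_eq_zero {K : Type*} [Field K] (x y : K) :
    ∃ a b : K, (a ≠ 0 ∨ b ≠ 0) ∧ a * x + b * y = 0 := by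
  by_cases hx : x = 0
  · exact ⟨1, 0, .inl one_ne_zero, by simp [hx]⟩
  · exact ⟨y, -x, .inr (neg_ne_zero.2 hx), by ring⟩

section ColumnDistance

variable {F ι : Type*} [Field F] [Fintype ι]

lemma sum_hammingWt_coeff_C (w : ι → F) (j : ℕ) :
    ∑ t ∈ range (j + 1), hammingWt (fun i => (C (w i)).coeff t) = hammingWt w := by
  rw [sum_range_succ']
  simp [coeff_C_succ, ← Pi.zero_def, hammingWt_zero]

lemma colDist_le_hammingWt_of_C_mem {S : Set (ι → F[X])} {w : ι → F} (hw : w ≠ 0)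
    (hmem : (fun i => C (w i)) ∈ S) (j : ℕ) : colDist S j ≤ hammingWt w := by
  obtain ⟨i, hi⟩ := Function.ne_iff.1 hw
  exact Nat.sInf_le ⟨_, hmem, ⟨i, by simpa using hi⟩, (sum_hammingWt_coeff_C w j).symm⟩

theorem colDist_lt_card_of_linearIndependent_C {S : Submodule F[X] (ι → F[X])} {w₁ w₂ : ι → F}
    (hli : LinearIndependent F[X] ![fun i => C (w₁ i), fun i => C (w₂ i)])
    (h₁ : (fun i => C (w₁ i)) ∈ S) (h₂ : (fun i => C (w₂ i)) ∈ S) (i₀ : ι) (j : ℕ) :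
    colDist (S : Set (ι → F[X])) j < Fintype.card ι := by
  obtain ⟨a, b, hab, hi₀⟩ := exists_mul_add_mul_eq_zero (w₁ i₀) (w₂ i₀)
  set w : ι → F := a • w₁ + b • w₂
  have hC : (fun i => C (w i)) = C a • (fun i => C (w₁ i)) + C b • (fun i => C (w₂ i)) := by
    ext1 i
    simp [w]
  have hw : w ≠ 0 := by
    intro hw0
    have hzero := LinearIndependent.pair_iff.1 hli (C a) (C b) (by rw [← hC, hw0]; ext; simp)
    rcases hab with ha | hb <;> simp_all
  calc colDist (S : Set (ι → F[X])) j ≤ hammingWt w :=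
        colDist_le_hammingWt_of_C_mem hw (hC ▸ S.add_mem (S.smul_mem _ h₁) (S.smul_mem _ h₂)) j
    _ < Fintype.card ι := hammingWt_lt_card (i₀ := i₀) (by simpa [w] using hi₀)

end ColumnDistance

lemma exists_eq_zero_forall_ne_eq_one {ι : Type*} [Fintype ι] (d : ι → ℕ) (hle : ∀ i, d i ≤ 1)
    (hsum : ∑ i, d i + 1 = Fintype.card ι) : ∃ i₀, d i₀ = 0 ∧ ∀ i ≠ i₀, d i = 1 := by
  classical
  obtain ⟨i₀, hi₀⟩ : ∃ i₀, d i₀ = 0 := by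
    by_contra! h
    have hone : ∀ i, d i = 1 := fun i => by have := h i; have := hle i; omega
    simp [hone] at hsum
  refine ⟨i₀, hi₀, fun i hne => ?_⟩
  by_contra h
  have hi : d i = 0 := by have := hle i; omega
  have hcard := Fintype.one_lt_card_iff.2 ⟨i, i₀, hne⟩
  have hbound : ∑ k ∈ (univ.erase i₀).erase i, d k ≤ #((univ.erase i₀).erase i) := by
    simpa using sum_le_card_nsmul _ d 1 fun k _ => hle k
  rw [sum_erase _ hi, sum_erase _ hi₀, card_erase_of_mem (mem_erase.2 ⟨hne, mem_univ _⟩),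
    card_erase_of_mem (mem_univ _), card_univ] at hbound
  omega

theorem stmt19_general (F : Type*) [Field F]
    (C : Submodule F[X] (Fin 5 → F[X]))
    (G : Matrix (Fin 5) (Fin 3) F[X])
    (hfull : LinearIndependent F[X] G.transpose)
    (hgen : C = Submodule.span F[X] (Set.range G.transpose))
    (hdeg1 : ∀ i j, (G i j).natDegree ≤ 1)  -- G(z) = G₀ + G₁ z
    (hred : ∑ j : Fin 3, colDeg G j = 2)  -- G is column reduced
    -- C is MDP: here L = ⌊2/3⌋ + ⌊2/2⌋ = 1
    (hMDP : ∀ j ≤ 1, colDist (C : Set (Fin 5 → F[X])) j = 2 * (j + 1) + 1) :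
    (¬ ∃ j₁ j₂ : Fin 3, j₁ ≠ j₂ ∧
        (∀ i, (G i j₁).coeff 1 = 0) ∧ (∀ i, (G i j₂).coeff 1 = 0)) ∧
    ∃ j₀ : Fin 3, colDeg G j₀ = 0 ∧ ∀ j ≠ j₀, colDeg G j = 1 := by
  constructor
  · rintro ⟨j₁, j₂, hne, h₁, h₂⟩
    have hconst : ∀ j, (∀ i, (G i j).coeff 1 = 0) →
        G.transpose j = fun i => Polynomial.C ((G i j).coeff 0) := fun j hj =>
      funext fun i => eq_C_of_natDegree_le_one_of_coeff_one_eq_zero (hdeg1 i j) (hj i)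
    have hmem : ∀ j, G.transpose j ∈ C := fun j => hgen ▸ Submodule.subset_span ⟨j, rfl⟩
    have hpair : LinearIndependent F[X] ![G.transpose j₁, G.transpose j₂] := by
      convert hfull.comp ![j₁, j₂] (injective_pair_iff_ne.2 hne) using 1
      exact FinVec.map_eq G.transpose ![j₁, j₂]
    rw [hconst j₁ h₁, hconst j₂ h₂] at hpair
    have hlt := colDist_lt_card_of_linearIndependent_C hpair
      (hconst j₁ h₁ ▸ hmem j₁) (hconst j₂ h₂ ▸ hmem j₂) 0 1
    simp [hMDP 1 le_rfl] at hlt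
  · refine exists_eq_zero_forall_ne_eq_one _ (fun j => Finset.sup_le fun i _ => hdeg1 i j) ?_
    simp [hred]

/-- A `(5,3,2)` MDP convolutional code with column reduced generator matrix
`G(z) = G₀ + G₁ z` cannot have two columns of `G₁` identically zero; consequently
the column degrees of `G` are `1, 1, 0` (in some order). -/
theorem stmt19 (F : Type*) [Field F] [Fintype F]
    (C : Submodule F[X] (Fin 5 → F[X]))
    (G : Matrix (Fin 5) (Fin 3) F[X])
    (hfull : LinearIndependent F[X] G.transpose)
    (hgen : C = Submodule.span F[X] (Set.range G.transpose))
    (hdeg1 : ∀ i j, (G i j).natDegree ≤ 1)  -- G(z) = G₀ + G₁ z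
    (hδ : genDeg G = 2)
    (hred : ∑ j : Fin 3, colDeg G j = 2)  -- G is column reduced
    -- C is MDP: here L = ⌊2/3⌋ + ⌊2/2⌋ = 1
    (hMDP : ∀ j ≤ 1, colDist (C : Set (Fin 5 → F[X])) j = 2 * (j + 1) + 1) :
    (¬ ∃ j₁ j₂ : Fin 3, j₁ ≠ j₂ ∧
        (∀ i, (G i j₁).coeff 1 = 0) ∧ (∀ i, (G i j₂).coeff 1 = 0)) ∧
    ∃ j₀ : Fin 3, colDeg G j₀ = 0 ∧ ∀ j ≠ j₀, colDeg G j = 1 :=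
  stmt19_general F C G hfull hgen hdeg1 hred hMDP
end
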